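/- Let w be an extremal and irreducible word and let 0 < k < |w|. If Pre_k(w) = Suff_k(w), then sgn(Pre_k(w)) = −1. -/
import Mathlib


/-- The set `Σ` of infinite paths in the graph with edge relation `E`. -/
def InSigma (E : ℕ → ℕ → Prop) (a : ℕ → ℕ) : Prop :=
  ∀ n : ℕ, E (a n) (a (n + 1))

/-- The shift map `σ`. -/
def shiftSeq (a : ℕ → ℕ) : ℕ → ℕ := fun n => a (n + 1)

/-- The linear order on infinite sequences determined by the sign function `O`:
`a < b` iff they first differ at position `n` and `(∏_{k<n} O(a k)) * (a n - b n) < 0`. -/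
def SeqLt (O : ℕ → ℤ) (a b : ℕ → ℕ) : Prop :=
  ∃ n : ℕ, (∀ k < n, a k = b k) ∧
    (∏ k ∈ Finset.range n, O (a k)) * ((a n : ℤ) - (b n : ℤ)) < 0

def SeqLe (O : ℕ → ℤ) (a b : ℕ → ℕ) : Prop :=
  SeqLt O a b ∨ a = b

/-- An element of `Σ` is admissible if it starts with `N` and all its shifts are `≤` itself. -/
def AdmissibleSeq (E : ℕ → ℕ → Prop) (O : ℕ → ℤ) (N : ℕ) (a : ℕ → ℕ) : Prop :=
  InSigma E a ∧ a 0 = N ∧ ∀ n : ℕ, SeqLe O (shiftSeq^[n] a) a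

/-- `w^∞`, the periodic sequence repeating the finite word `w`. -/
def perSeq (w : List ℕ) : ℕ → ℕ := fun n => w.getD (n % w.length) 0

/-- The infinite sequence starting with the word `w` followed by the sequence `s`. -/
def wordThen (w : List ℕ) (s : ℕ → ℕ) : ℕ → ℕ :=
  fun n => if n < w.length then w.getD n 0 else s (n - w.length)

/-- `sgn(w) = ∏_k O(w_k)`. -/
def wordSgn (O : ℕ → ℤ) (w : List ℕ) : ℤ := (w.map O).prod

/-- The partial order on finite words determined by `O`. -/
def WordLt (O : ℕ → ℤ) (u v : List ℕ) : Prop :=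
  ∃ j : ℕ, j < min u.length v.length ∧ (∀ k < j, u.getD k 0 = v.getD k 0) ∧
    (∏ k ∈ Finset.range j, O (u.getD k 0)) * ((u.getD j 0 : ℤ) - (v.getD j 0 : ℤ)) < 0

/-- A finite word is periodic if `w^∞ ∈ Σ` and `w` starts with the letter `N`. -/
def PeriodicWord (E : ℕ → ℕ → Prop) (N : ℕ) (w : List ℕ) : Prop :=
  w ≠ [] ∧ InSigma E (perSeq w) ∧ w.getD 0 0 = N

/-- A finite word is irreducible if it is not a concatenation of two or more copies
of a shorter word. -/
def IrreducibleWord (w : List ℕ) : Prop :=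
  ∀ (u : List ℕ) (k : ℕ), 2 ≤ k → w ≠ (List.replicate k u).flatten

/-- A finite word is extremal if it is periodic and `w^∞` is admissible. -/
def ExtremalWord (E : ℕ → ℕ → Prop) (O : ℕ → ℤ) (N : ℕ) (w : List ℕ) : Prop :=
  PeriodicWord E N w ∧ AdmissibleSeq E O N (perSeq w)

/-- A finite word is admissible if it is extremal and has sign `1`. -/
def AdmissibleWord (E : ℕ → ℕ → Prop) (O : ℕ → ℤ) (N : ℕ) (w : List ℕ) : Prop :=
  ExtremalWord E O N w ∧ wordSgn O w = 1

/-- A finite word `w` is dominant if it is periodic and `Suff_k(wN) < Pre_k(w)`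
for all `2 ≤ k ≤ |w|`. -/
def DominantWord (E : ℕ → ℕ → Prop) (O : ℕ → ℤ) (N : ℕ) (w : List ℕ) : Prop :=
  PeriodicWord E N w ∧ ∀ k : ℕ, 2 ≤ k → k ≤ w.length →
    WordLt O ((w ++ [N]).drop (w.length + 1 - k)) (w.take k)

/-- `a' = Next(a)`: `a'` is the immediate successor of `a` among periodic words
of the same length. Equivalently, `a = Prev(a')`. -/
def IsNext (E : ℕ → ℕ → Prop) (O : ℕ → ℤ) (N : ℕ) (a a' : List ℕ) : Prop :=
  PeriodicWord E N a ∧ PeriodicWord E N a' ∧ a.length = a'.length ∧ WordLt O a a' ∧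
    ∀ u : List ℕ, PeriodicWord E N u → u.length = a.length →
      ¬(WordLt O a u ∧ WordLt O u a')

/-- `(a, a')` is a tuning pair: `a` admissible, `a'` extremal of sign `-1`, `a' = Next(a)`. -/
def TuningPair (E : ℕ → ℕ → Prop) (O : ℕ → ℤ) (N : ℕ) (a a' : List ℕ) : Prop :=
  AdmissibleWord E O N a ∧ ExtremalWord E O N a' ∧ wordSgn O a' = -1 ∧ IsNext E O N a a'

/-- Condition (1) of tunability for the word `wmin`. -/
def MinWord (E : ℕ → ℕ → Prop) (O : ℕ → ℤ) (N : ℕ) (wmin : List ℕ) : Prop :=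
  PeriodicWord E N wmin ∧ wmin.count N = 1 ∧ wordSgn O wmin = -1 ∧
    PeriodicWord E N (wmin ++ [N]) ∧
    ∀ u : List ℕ, PeriodicWord E N u → u.length = wmin.length + 1 →
      u = wmin ++ [N] ∨ WordLt O (wmin ++ [N]) u

/-- `(Γ, O)` is tunable with minimal word `wmin`. -/
def Tunable (E : ℕ → ℕ → Prop) (O : ℕ → ℤ) (N : ℕ) (wmin : List ℕ) : Prop :=
  MinWord E O N wmin ∧
    ∀ a : List ℕ, ExtremalWord E O N a → IrreducibleWord a → wordSgn O a = -1 →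
      (∃ k : ℕ, Odd k ∧ a = (List.replicate k wmin).flatten) ∨
        ∃ a' : List ℕ, TuningPair E O N a' a

/-- The edge relation of `Γ₂`, the complete directed graph on `{0, 1}`. -/
def E2 : ℕ → ℕ → Prop := fun i j => i ≤ 1 ∧ j ≤ 1

/-- The sign function `O₂` of the binary setting: `O₂ 0 = 1`, `O₂ 1 = -1`. -/
def O2 : ℕ → ℤ := fun k => if k = 0 then 1 else -1

/-- The tuning `w * v` of a tuning pair `(w, w')` by a finite binary word `v`. -/
def tuningWord (w w' : List ℕ) (v : List ℕ) : List ℕ :=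
  (v.map fun i => if i = 0 then w else w').flatten

/-- The tuning `w * v` of a tuning pair `(w, w')` by an infinite binary sequence `v`. -/
def tuningSeq (w w' : List ℕ) (v : ℕ → ℕ) : ℕ → ℕ :=
  fun n => (if v (n / w.length) = 0 then w else w').getD (n % w.length) 0

/-- A word can be written as a tuning `a * v` with `|v| > 1`. -/
def IsTuning (E : ℕ → ℕ → Prop) (O : ℕ → ℤ) (N : ℕ) (x : List ℕ) : Prop :=
  ∃ (a a' v : List ℕ), TuningPair E O N a a' ∧ AdmissibleWord E2 O2 1 v ∧
    1 < v.length ∧ x = tuningWord a a' v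

/-- An admissible word is nonrenormalizable if it cannot be written as a tuning. -/
def Nonrenormalizable (E : ℕ → ℕ → Prop) (O : ℕ → ℤ) (N : ℕ) (w : List ℕ) : Prop :=
  AdmissibleWord E O N w ∧ ¬ IsTuning E O N w

/-- `PS(w)`: the set of common proper prefixes/suffixes `v` of `w` with `w = yv = vz`, `z₀ = N`. -/
def PS (N : ℕ) (w : List ℕ) : Set (List ℕ) :=
  {v | 0 < v.length ∧ v.length < w.length ∧ (∃ y, w = y ++ v) ∧
    ∃ z, w = v ++ z ∧ z.getD 0 0 = N}

/-- `RS(w)`: the set of words `z` with `w = vz` for some `v ∈ PS(w)`. -/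
def RS (N : ℕ) (w : List ℕ) : Set (List ℕ) :=
  {z | ∃ v ∈ PS N w, w = v ++ z}

/-- There is a walk of length `n` from `i` to `j` in the graph `E`. -/
def HasWalk (E : ℕ → ℕ → Prop) (i j n : ℕ) : Prop :=
  ∃ a : ℕ → ℕ, a 0 = i ∧ a n = j ∧ ∀ k < n, E (a k) (a (k + 1))

/-- The standing assumptions on `(Γ, O)`: vertex set `{0, …, N}`, `O` takes values in `{±1}`,
and the graph is strongly connected and aperiodic (equivalently, primitive). -/
def GoodGraph (E : ℕ → ℕ → Prop) (O : ℕ → ℤ) (N : ℕ) : Prop :=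
  (∀ i j, E i j → i ≤ N ∧ j ≤ N) ∧
  (∀ i, i ≤ N → O i = 1 ∨ O i = -1) ∧
  (∃ m : ℕ, 0 < m ∧ ∀ i j, i ≤ N → j ≤ N → HasWalk E i j m)


lemma getD_take_aux (l : List ℕ) (n i : ℕ) (h : i < n) (h2 : i < l.length) :
    (l.take n).getD i 0 = l.getD i 0 := by
  rw [List.getD_eq_getElem _ _ (by simp; omega), List.getD_eq_getElem _ _ h2]
  simp [List.getElem_take]

lemma getD_drop_aux (l : List ℕ) (n i : ℕ) (h : n + i < l.length) :
    (l.drop n).getD i 0 = l.getD (n+i) 0 := by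
  rw [List.getD_eq_getElem _ _ (by simp; omega), List.getD_eq_getElem _ _ h]
  simp [List.getElem_drop]

lemma shift_iter (a : ℕ → ℕ) (n : ℕ) : shiftSeq^[n] a = fun m => a (m + n) := by
  induction n with
  | zero => simp
  | succ n ih =>
    rw [Function.iterate_succ_apply', ih]
    funext m
    show a (m + 1 + n) = a (m + (n+1))
    congr 1; omega

lemma seqLt_asymm (O : ℕ → ℤ) (x y : ℕ → ℕ) (h1 : SeqLt O x y) (h2 : SeqLt O y x) : False := by
  obtain ⟨n1, ha1, hp1⟩ := h1
  obtain ⟨n2, ha2, hp2⟩ := h2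
  rcases lt_trichotomy n1 n2 with h | h | h
  · rw [ha2 n1 h] at hp1; simp at hp1
  · subst h
    have he : ∀ j ∈ Finset.range n1, O (y j) = O (x j) := fun j hj => by
      rw [ha1 j (Finset.mem_range.mp hj)]
    rw [Finset.prod_congr rfl he] at hp2
    nlinarith
  · rw [ha1 n2 h] at hp2; simp at hp2

lemma wordSgn_eq_prod (O : ℕ → ℤ) (u : List ℕ) :
    wordSgn O u = ∏ j ∈ Finset.range u.length, O (u.getD j 0) := by
  induction u with
  | nil => simp [wordSgn]
  | cons x u ih =>
    rw [wordSgn, List.map_cons, List.prod_cons, List.length_cons,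
      Finset.prod_range_succ']
    simp only [List.getD_cons_succ, List.getD_cons_zero]
    rw [← wordSgn, ih, mul_comm]

lemma prod_pm (O : ℕ → ℤ) (a : ℕ → ℕ) (h : ∀ j, O (a j) = 1 ∨ O (a j) = -1) (n : ℕ) :
    (∏ j ∈ Finset.range n, O (a j)) = 1 ∨ (∏ j ∈ Finset.range n, O (a j)) = -1 := by
  induction n with
  | zero => simp
  | succ n ih =>
    rw [Finset.prod_range_succ]
    rcases ih with h1 | h1 <;> rcases h n with h2 | h2 <;> rw [h1, h2] <;> norm_num

lemma per_mul (a : ℕ → ℕ) (q : ℕ) (hq : ∀ n, a (n + q) = a n) :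
    ∀ m n, a (n + q * m) = a n := by
  intro m
  induction m with
  | zero => simp
  | succ m ih =>
    intro n
    have h : n + q * (m + 1) = (n + q * m) + q := by ring
    rw [h, hq, ih]

lemma per_gcd (a : ℕ → ℕ) : ∀ q, 0 < q → ∀ p, (∀ n, a (n + q) = a n) →
    (∀ n, a (n + p) = a n) → ∀ n, a (n + Nat.gcd q p) = a n := by
  intro q
  induction q using Nat.strong_induction_on with
  | _ q ih =>
    intro hq0 p hq hp n
    rcases Nat.eq_zero_or_pos (p % q) with h0 | hpos
    · rw [Nat.gcd_rec, h0, Nat.gcd_zero_left]; exact hq n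
    · rw [Nat.gcd_rec]
      have hper : ∀ n, a (n + p % q) = a n := by
        intro n
        have h1 := per_mul a q hq (p / q) (n + p % q)
        have h2 : n + p % q + q * (p / q) = n + p := by
          have := Nat.mod_add_div p q; omega
        rw [h2] at h1
        rw [← h1, hp]
      exact ih (p % q) (Nat.mod_lt _ hq0) hpos q hper hq n

lemma flatten_replicate_length (u : List ℕ) : ∀ m, ((List.replicate m u).flatten).length = m * u.length := by
  intro m
  induction m with
  | zero => simp
  | succ m ih => rw [List.replicate_succ, List.flatten_cons, List.length_append, ih]; ring

lemma flatten_replicate_getD (u : List ℕ) (_hu : 0 < u.length) :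
    ∀ m i, i < m * u.length → ((List.replicate m u).flatten).getD i 0 = u.getD (i % u.length) 0 := by
  intro m
  induction m with
  | zero => intro i hi; omega
  | succ m ih =>
    intro i hi
    rw [Nat.succ_mul] at hi
    rw [List.replicate_succ, List.flatten_cons]
    rcases lt_or_ge i u.length with h | h
    · rw [List.getD_append _ _ _ _ h, Nat.mod_eq_of_lt h]
    · rw [List.getD_append_right _ _ _ _ h, ih (i - u.length) (by omega)]
      congr 1
      conv_rhs => rw [show i = (i - u.length) + u.length by omega]
      rw [Nat.add_mod_right]

/-- If `w` is extremal and irreducible, `0 < k < |w|`, and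
`Pre_k(w) = Suff_k(w)`, then `sgn(Pre_k(w)) = -1`. -/
theorem statement4 (E : ℕ → ℕ → Prop) (O : ℕ → ℤ) (N : ℕ) (hG : GoodGraph E O N)
    (w : List ℕ) (hw : ExtremalWord E O N w) (hirr : IrreducibleWord w)
    (k : ℕ) (hk0 : 0 < k) (hkw : k < w.length)
    (heq : w.take k = w.drop (w.length - k)) :
    wordSgn O (w.take k) = -1 := by
  classical
  by_contra hne
  obtain ⟨⟨hwne, hin, hw0⟩, hinA, ha0, hadm⟩ := hw
  set a := perSeq w with ha_def
  have hp : 0 < w.length := List.length_pos_iff.mpr hwne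
  have ha : ∀ n, a n = w.getD (n % w.length) 0 := fun n => rfl
  have haper : ∀ n, a (n + w.length) = a n := by
    intro n; rw [ha, ha, Nat.add_mod_right]
  have haN : ∀ n, a n ≤ N := fun n => (hG.1 _ _ (hinA n)).1
  have hO : ∀ n, O (a n) = 1 ∨ O (a n) = -1 := fun n => hG.2.1 _ (haN n)
  have halt : ∀ i, i < w.length → a i = w.getD i 0 := by
    intro i hi; rw [ha, Nat.mod_eq_of_lt hi]
  -- the prefix = suffix hypothesis, in terms of a
  have hsuff : ∀ m, m < k → a (m + (w.length - k)) = a m := by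
    intro m hm
    rw [halt _ (by omega), halt _ (by omega)]
    have h1 := congrArg (fun l => l.getD m 0) heq
    rw [getD_take_aux _ _ _ hm (by omega), getD_drop_aux _ _ _ (by omega)] at h1
    rw [show m + (w.length - k) = w.length - k + m by omega]
    exact h1.symm
  -- sign of the prefix, assumed = 1
  have hsgnP : wordSgn O (w.take k) = ∏ j ∈ Finset.range k, O (a j) := by
    rw [wordSgn_eq_prod]
    rw [List.length_take, min_eq_left hkw.le]
    refine Finset.prod_congr rfl (fun j hj => ?_)
    have hjk := Finset.mem_range.mp hj
    rw [getD_take_aux _ _ _ hjk (by omega), halt _ (by omega)]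
  have hsgn1 : ∏ j ∈ Finset.range k, O (a j) = 1 := by
    rcases prod_pm O a hO k with h | h
    · exact h
    · exact absurd (hsgnP.trans h) hne
  set q := w.length - k with hq_def
  have hq0 : 0 < q := by omega
  have hck : ∀ m, a (k + m + q) = a m := by
    intro m
    rw [show k + m + q = m + w.length by omega, haper]
  have hle := hadm q
  rw [shift_iter] at hle
  rcases hle with hlt | heqc
  · -- impossible: leads to SeqLt a (shift^k a), contradicting admissibility
    obtain ⟨n, hag, hprod⟩ := hlt
    beta_reduce at hag hprod
    have hnk : k ≤ n := by
      by_contra h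
      push_neg at h
      rw [hsuff n h] at hprod
      simp at hprod
    obtain ⟨m, rfl⟩ : ∃ m, n = k + m := ⟨n - k, by omega⟩
    rw [Finset.prod_range_add] at hprod
  
    have e1 : (∏ j ∈ Finset.range k, O (a (j + q))) = 1 := by
      rw [← hsgn1]
      exact Finset.prod_congr rfl (fun j hj => by
        rw [hsuff j (Finset.mem_range.mp hj)])
    rw [e1, one_mul] at hprod
    have e2 : (∏ j ∈ Finset.range m, O (a (k + j + q)))
        = ∏ j ∈ Finset.range m, O (a j) :=
      Finset.prod_congr rfl (fun j _ => by rw [hck])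
    rw [e2, hck m] at hprod
    have hb : SeqLt O a (fun i => a (i + k)) := by
      refine ⟨m, fun j hj => ?_, ?_⟩
      · have h1 := hag (k + j) (by omega)
        rw [hck] at h1
        show a j = a (j + k)
        rw [show j + k = k + j + q - q by omega]
        rw [show k + j + q - q = k + j by omega]
        exact h1
      · show (∏ j ∈ Finset.range m, O (a j)) * ((a m : ℤ) - (a (m + k) : ℤ)) < 0
        rw [show m + k = k + m by omega]
        exact hprod
    have hle2 := hadm k
    rw [shift_iter] at hle2
    rcases hle2 with hlt2 | heq2
    · exact seqLt_asymm O a _ hb hlt2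
    · rw [heq2] at hb
      obtain ⟨n, _, h⟩ := hb
      simp at h
  · -- period q, hence period gcd q |w| < |w|, contradicting irreducibility
    have hqper : ∀ n, a (n + q) = a n := fun n => congrFun heqc n
    set g := Nat.gcd q w.length with hg_def
    have hg : ∀ n, a (n + g) = a n := per_gcd a q hq0 w.length hqper haper
    have hgp : g ∣ w.length := Nat.gcd_dvd_right q w.length
    have hg0 : 0 < g := Nat.gcd_pos_of_pos_left _ hq0
    have hglt : g < w.length := lt_of_le_of_lt (Nat.gcd_le_left _ hq0) (by omega)
    obtain ⟨t, htp⟩ := hgp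
    have ht2 : 2 ≤ t := by
      have h1 : g * 1 < g * t := by rw [mul_one, ← htp]; exact hglt
      have := Nat.lt_of_mul_lt_mul_left h1
      omega
    refine hirr (w.take g) t ht2 ?_
    have hlen : (w.take g).length = g := by
      rw [List.length_take, min_eq_left hglt.le]
    apply List.ext_getElem
    · rw [flatten_replicate_length, hlen, mul_comm]
      exact htp
    · intro i h1 h2
      rw [← List.getD_eq_getElem _ 0 h1, ← List.getD_eq_getElem _ 0 h2]
      have hib : i < t * (w.take g).length := by
        rw [hlen, mul_comm, ← htp]; exact h1
      rw [flatten_replicate_getD _ (by omega) t i hib, hlen]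
      have him : i % g < g := Nat.mod_lt _ hg0
      rw [getD_take_aux _ _ _ him (by omega)]
      rw [← halt _ h1, ← halt _ (by omega : i % g < w.length)]
      conv_lhs => rw [show i = i % g + g * (i / g) from (Nat.mod_add_div i g).symm]
      rw [per_mul a g hg]
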